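/- arXiv:1708.07057 — 3 statements merged into one kernel-verified Lean document; each statement's English description precedes it below -/
import Mathlib

section
/- For a real number r > 0 and nonnegative integer k, define δ(r,k) = max{N ≥ 0 : r·v(k+1) + N ≤ r·v(k+N+1)}, where v denotes the p-adic valuation. If p > r + 1 (with r a positive integer), then δ(r,k) ≤ r·⌊k/(p−r−1)⌋. -/
/-! Put `m = v(k+δ+1) - v(k+1)`, so that `δ ≤ r·m`. Since `p^m ∣ k+δ+1`, Bernoulli's inequality
gives `(p-1)·m < k+δ+1 ≤ k + r·m + 1`, that is `(p-r-1)·m ≤ k`. -/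

theorem sub_one_mul_padicValNat_lt (p : ℕ) {n : ℕ} (hn : n ≠ 0) :
    (p - 1) * padicValNat p n < n := by
  rcases Nat.eq_zero_or_pos p with rfl | hp
  · simpa using Nat.pos_of_ne_zero hn
  have bernoulli : 1 + padicValNat p n * (p - 1) ≤ p ^ padicValNat p n := by
    have h := one_add_le_pow_of_two_add_nonneg (Nat.zero_le (2 + (p - 1))) (padicValNat p n)
    rwa [Nat.cast_id, Nat.add_sub_cancel' (Nat.one_le_of_lt hp)] at h
  have hpow := Nat.le_of_dvd (Nat.pos_of_ne_zero hn) (pow_padicValNat_dvd (p := p) (n := n))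
  rw [Nat.mul_comm]
  omega

theorem stmt0_general (p r k δ : ℕ) (hpr : r + 1 < p)
    (hδ : r * padicValNat p (k + 1) + δ ≤ r * padicValNat p (k + δ + 1)) :
    δ ≤ r * (k / (p - r - 1)) := by
  set m := padicValNat p (k + δ + 1) - padicValNat p (k + 1)
  have hδm : δ ≤ r * m := by
    rw [Nat.mul_sub]
    omega
  have hm : (p - 1) * m < k + δ + 1 :=
    lt_of_le_of_lt (Nat.mul_le_mul_left _ (Nat.sub_le _ _))
      (sub_one_mul_padicValNat_lt p (Nat.succ_ne_zero _))
  have hsplit : (p - 1) * m = (p - r - 1) * m + r * m := by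
    rw [← Nat.add_mul]
    congr 1
    omega
  have hkey : m * (p - r - 1) ≤ k := by
    rw [Nat.mul_comm]
    omega
  calc δ ≤ r * m := hδm
    _ ≤ r * (k / (p - r - 1)) :=
      Nat.mul_le_mul_left _ ((Nat.le_div_iff_mul_le (by omega)).mpr hkey)

/-- Fix a prime `p` and let `v = padicValNat p`. For a positive integer `r`
with `p > r + 1` and a nonnegative integer `k`, let `δ` be the greatest `N ≥ 0` with
`r·v(k+1) + N ≤ r·v(k+N+1)`. Then `δ ≤ r·⌊k/(p−r−1)⌋`. -/
theorem stmt0 (p r k δ : ℕ) (hp : p.Prime) (hr : 0 < r) (hpr : r + 1 < p)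
    (hδ : r * padicValNat p (k + 1) + δ ≤ r * padicValNat p (k + δ + 1))
    (hδmax : ∀ N : ℕ, r * padicValNat p (k + 1) + N ≤ r * padicValNat p (k + N + 1) → N ≤ δ) :
    δ ≤ r * (k / (p - r - 1)) :=
  stmt0_general p r k δ hpr hδ
end

section
/- For a prime p, a positive integer r with p > r + 1, and nonnegative integer k, with δ(r,k) as defined, one has k + δ(r,k) ≤ μ_r · k where μ_r = (p−1)/(p−r−1). -/
/-!
Let `m = v(k + δ + 1)`. The defining inequality of `δ` gives `δ ≤ r m`, and
`p ^ m ∣ k + δ + 1` together with Bernoulli's inequality gives `m (p - 1) ≤ p ^ m - 1 ≤ k + δ`.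
Hence `δ (p - 1) ≤ r m (p - 1) ≤ r (k + δ)`, which rearranges to `(k + δ)(p - r - 1) ≤ (p - 1) k`.
-/

lemma padicValNat_succ_mul_sub_one_le {p : ℕ} (hp : 1 ≤ p) (n : ℕ) :
    padicValNat p (n + 1) * (p - 1) ≤ n := by
  have hbernoulli : 1 + padicValNat p (n + 1) * (p - 1) ≤ p ^ padicValNat p (n + 1) := by
    simpa [Nat.add_sub_cancel' hp] using
      one_add_le_pow_of_two_add_nonneg (Nat.zero_le (2 + (p - 1))) (padicValNat p (n + 1))
  have hdvd : p ^ padicValNat p (n + 1) ≤ n + 1 :=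
    Nat.le_of_dvd n.succ_pos pow_padicValNat_dvd
  omega

lemma mul_sub_one_le_mul_add_of_add_le_mul_padicValNat {p r k δ : ℕ} (hp : 1 ≤ p)
    (hδ : r * padicValNat p (k + 1) + δ ≤ r * padicValNat p (k + δ + 1)) :
    δ * (p - 1) ≤ r * (k + δ) :=
  calc δ * (p - 1) ≤ r * padicValNat p (k + δ + 1) * (p - 1) :=
        Nat.mul_le_mul_right _ (le_of_add_le_right hδ)
    _ = r * (padicValNat p (k + δ + 1) * (p - 1)) := Nat.mul_assoc _ _ _
    _ ≤ r * (k + δ) := Nat.mul_le_mul_left _ (padicValNat_succ_mul_sub_one_le hp _)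

theorem stmt1_general (p r k δ : ℕ) (hpr : r + 1 < p)
    (hδ : r * padicValNat p (k + 1) + δ ≤ r * padicValNat p (k + δ + 1)) :
    (k : ℝ) + δ ≤ ((p : ℝ) - 1) / ((p : ℝ) - r - 1) * k := by
  have hkey : (δ : ℝ) * ((p : ℝ) - 1) ≤ r * (k + δ) := by
    have h := mul_sub_one_le_mul_add_of_add_le_mul_padicValNat (by omega) hδ
    rw [← Nat.cast_le (α := ℝ)] at h
    push_cast [show 1 ≤ p by omega] at h
    exact h
  have hden : (0 : ℝ) < (p : ℝ) - r - 1 := by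
    have : ((r + 1 : ℕ) : ℝ) < p := by exact_mod_cast hpr
    push_cast at this
    linarith
  rw [div_mul_eq_mul_div, le_div_iff₀ hden]
  linarith

/-- With `p` prime, `v = padicValNat p`, `r` a positive integer with `p > r+1`,
`δ = δ(r,k)` the greatest `N ≥ 0` with `r·v(k+1) + N ≤ r·v(k+N+1)`, and
`μ_r = (p−1)/(p−r−1)`, one has `k + δ ≤ μ_r · k`. -/
theorem stmt1 (p r k δ : ℕ) (hp : p.Prime) (hr : 0 < r) (hpr : r + 1 < p)
    (hδ : r * padicValNat p (k + 1) + δ ≤ r * padicValNat p (k + δ + 1))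
    (hδmax : ∀ N : ℕ, r * padicValNat p (k + 1) + N ≤ r * padicValNat p (k + N + 1) → N ≤ δ) :
    (k : ℝ) + δ ≤ ((p : ℝ) - 1) / ((p : ℝ) - r - 1) * k :=
  stmt1_general p r k δ hpr hδ
end

section
/- Let K be a field with a valuation v, and let f(t) = Σ_{n≥1} a_n t^n ∈ K[[t]] be a power series with no constant term such that f'(t) has coefficients of nonnegative valuation (i.e., n·a_n has v(n·a_n) ≥ 0 for all n ≥ 1), and suppose k ≥ 1 is such that v(k·a_k) = 0. Let r > 0 be a real number. If u > k + δ(1/r, k−1) then for every w > r, v(a_u) + u·w > v(a_k) + k·w; in particular the point (u, v(a_u)) is not a vertex of the lower Newton polygon of f at slope parameter w. -/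
/-! Since `v(k·a_k) = 0` and `v(u·a_u) ≥ 0`, we have `v(a_k) = -v(k)` and `v(a_u) ≥ -v(u)`, so it
suffices that `v(u) - v(k) < (u - k)·w`. Maximality of `δ` applied to `N = u - k > δ` gives
`v(u) - v(k) < (u - k)·r`, and `r < w`. -/

lemma Padic.valuation_natCast_mul {p : ℕ} [Fact p.Prime] {n : ℕ} (hn : n ≠ 0) {x : ℚ_[p]}
    (hx : x ≠ 0) : ((n : ℚ_[p]) * x).valuation = padicValNat p n + x.valuation := by
  rw [Padic.valuation_mul (Nat.cast_ne_zero.mpr hn) hx, Padic.valuation_natCast]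

lemma lt_add_sub_mul_of_forall_le_of_add_lt {v : ℕ → ℝ} {s : ℝ} (hs : 0 < s) {k δ u : ℕ}
    (hδmax : ∀ N : ℕ, (1 / s) * v k + N ≤ (1 / s) * v (k + N) → N ≤ δ) (hu : k + δ < u) :
    v u < v k + (u - k) * s := by
  obtain ⟨N, rfl⟩ : ∃ N, u = k + N := ⟨u - k, by omega⟩
  have hN : ¬ (1 / s) * v k + N ≤ (1 / s) * v (k + N) := fun h ↦ by
    have := hδmax N h
    omega
  rw [not_le, ← sub_lt_iff_lt_add', ← mul_sub, one_div, inv_mul_lt_iff₀ hs] at hN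
  push_cast
  linarith

theorem stmt8_general (p : ℕ) [Fact p.Prime] (a : ℕ → ℚ_[p]) (k : ℕ) (hk : 1 ≤ k)
    (ha : ∀ n : ℕ, 1 ≤ n → a n ≠ 0 → 0 ≤ ((n : ℚ_[p]) * a n).valuation)
    (hak : a k ≠ 0) (hvk : ((k : ℚ_[p]) * a k).valuation = 0)
    (r : ℝ) (hr : 0 < r) (δ : ℕ)
    (hδmax : ∀ N : ℕ, (1 / r) * (padicValNat p k : ℝ) + (N : ℝ)
        ≤ (1 / r) * (padicValNat p (k + N) : ℝ) → N ≤ δ)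
    (u : ℕ) (hu : k + δ < u) (hau : a u ≠ 0) :
    ∀ w : ℝ, r < w →
      ((a k).valuation : ℝ) + (k : ℝ) * w < ((a u).valuation : ℝ) + (u : ℝ) * w := by
  intro w hw
  have hvak : (a k).valuation = -(padicValNat p k : ℤ) := by
    rw [Padic.valuation_natCast_mul (by omega) hak] at hvk
    omega
  have hvau : -(padicValNat p u : ℝ) ≤ (a u).valuation := by
    have := ha u (by omega) hau
    rw [Padic.valuation_natCast_mul (by omega) hau] at this
    exact_mod_cast (by omega : -(padicValNat p u : ℤ) ≤ (a u).valuation)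
  have hvu :=
    lt_add_sub_mul_of_forall_le_of_add_lt (v := fun n ↦ (padicValNat p n : ℝ)) hr hδmax hu
  have hrw : ((u : ℝ) - k) * r ≤ ((u : ℝ) - k) * w := by
    have : (k : ℝ) ≤ u := by exact_mod_cast hu.le.trans' (Nat.le_add_right k δ)
    gcongr
  rw [hvak, Int.cast_neg, Int.cast_natCast]
  linarith

/-- Let `f(t) = Σ_{n≥1} aₙ tⁿ` be a power series over the `p`-adic valued
field `ℚ_p` with no constant term, such that `f'` has coefficients of nonnegative
valuation (`v(n·aₙ) ≥ 0` for `n ≥ 1`), and `k ≥ 1` with `v(k·a_k) = 0`.  Let `r > 0`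
and let `δ = δ(1/r, k−1)` be the greatest `N ≥ 0` with `(1/r)·v(k) + N ≤ (1/r)·v(k+N)`
(where `v` on integers is the `p`-adic valuation).  If `u > k + δ` and `a_u ≠ 0`, then
for every `w > r` we have `v(a_u) + u·w > v(a_k) + k·w`; in particular `(u, v(a_u))`
is not in `vrt_w(f)`. -/
theorem stmt8 (p : ℕ) [Fact p.Prime] (a : ℕ → ℚ_[p]) (k : ℕ) (hk : 1 ≤ k)
    (ha : ∀ n : ℕ, 1 ≤ n → a n ≠ 0 → 0 ≤ ((n : ℚ_[p]) * a n).valuation)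
    (hak : a k ≠ 0) (hvk : ((k : ℚ_[p]) * a k).valuation = 0)
    (r : ℝ) (hr : 0 < r) (δ : ℕ)
    (hδ : (1 / r) * (padicValNat p k : ℝ) + (δ : ℝ)
        ≤ (1 / r) * (padicValNat p (k + δ) : ℝ))
    (hδmax : ∀ N : ℕ, (1 / r) * (padicValNat p k : ℝ) + (N : ℝ)
        ≤ (1 / r) * (padicValNat p (k + N) : ℝ) → N ≤ δ)
    (u : ℕ) (hu : k + δ < u) (hau : a u ≠ 0) :
    ∀ w : ℝ, r < w →
      ((a k).valuation : ℝ) + (k : ℝ) * w < ((a u).valuation : ℝ) + (u : ℝ) * w :=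
  stmt8_general p a k hk ha hak hvk r hr δ hδmax u hu hau
end
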